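/- arXiv:1903.10340 — 2 statements merged into one kernel-verified Lean document; each statement's English description precedes it below -/
import Mathlib

section
/- With the same notation, for every γ > 0 one has λ_γ < λ, where λ > 0 is the unique solution of λ·exp(λ²)·erf(λ) = (Ste/√π)·(1 + δ/(p+1)). -/
open Real

noncomputable def erf (x : ℝ) : ℝ := (2 / Real.sqrt π) * ∫ t in (0:ℝ)..x, Real.exp (-t^2)

/-!
Both `λ` and `λ_γ` are found by equating `√π/Ste · x e^{x²} erf x`, which is increasing in
`x ≥ 0`, to a value of `F`. For `λ` this value is `F(1) = 1 + δ/(p+1)`; for `λ_γ` it is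
`F(β_γ(λ_γ))` with `0 ≤ β_γ(λ_γ) < 1`, hence strictly smaller, since `F` is increasing on `[0, 1]`.
-/

open Set

lemma intervalIntegrable_exp_neg_sq (a b : ℝ) :
    IntervalIntegrable (fun t : ℝ => exp (-t ^ 2)) MeasureTheory.volume a b :=
  (by fun_prop : Continuous fun t : ℝ => exp (-t ^ 2)).intervalIntegrable a b

lemma erf_monotone : Monotone erf := by
  intro a b hab
  have hdiff : (∫ t in (0:ℝ)..b, exp (-t ^ 2)) - ∫ t in (0:ℝ)..a, exp (-t ^ 2)
      = ∫ t in a..b, exp (-t ^ 2) :=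
    intervalIntegral.integral_interval_sub_left (intervalIntegrable_exp_neg_sq 0 b)
      (intervalIntegrable_exp_neg_sq 0 a)
  have hnonneg : 0 ≤ ∫ t in a..b, exp (-t ^ 2) :=
    intervalIntegral.integral_nonneg hab fun t _ => (exp_pos _).le
  unfold erf
  gcongr
  linarith

lemma erf_nonneg {x : ℝ} (hx : 0 ≤ x) : 0 ≤ erf x := by
  simpa [erf] using erf_monotone hx

lemma monotoneOn_mul_exp_sq_mul_erf :
    MonotoneOn (fun x => x * exp (x ^ 2) * erf x) (Ici 0) := by
  have hexp : MonotoneOn (fun x : ℝ => exp (x ^ 2)) (Ici 0) := fun a ha b _ hab =>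
    exp_le_exp.mpr (pow_le_pow_left₀ ha hab 2)
  refine (monotoneOn_id.mul hexp (fun x hx => hx) fun x _ => (exp_pos _).le).mul
    (erf_monotone.monotoneOn _) (fun x hx => ?_) fun x hx => erf_nonneg hx
  exact mul_nonneg hx (exp_pos _).le

lemma add_mul_rpow_lt_one_add {β c q : ℝ} (hβ₀ : 0 ≤ β) (hβ₁ : β < 1) (hc : 0 ≤ c)
    (hq : 0 ≤ q) : β + c * β ^ q < 1 + c := by
  have : c * β ^ q ≤ c := mul_le_of_le_one_right hc (rpow_le_one hβ₀ hβ₁.le hq)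
  linarith

theorem lambda_gamma_lt_lambda_general (δ p Ste γ l lγ : ℝ) (hδ : 0 ≤ δ) (hp : 0 ≤ p)
    (hSte : 0 < Ste) (hγ : 0 < γ) (hl : 0 < l)
    (hlam : l * Real.exp (l^2) * erf l = (Ste / Real.sqrt π) * (1 + δ / (p + 1)))
    (hβ : 0 ≤ 1 - (2 * lγ * Real.exp (lγ^2)) / (γ * Ste))
    (heqγ : (1 - (2 * lγ * Real.exp (lγ^2)) / (γ * Ste)) +
        (δ / (p + 1)) * (1 - (2 * lγ * Real.exp (lγ^2)) / (γ * Ste)) ^ (p + 1) =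
      (Real.sqrt π / Ste) * (lγ * Real.exp (lγ^2) * erf lγ)) :
    lγ < l := by
  by_contra! hle
  have hlγ : 0 < lγ := hl.trans_le hle
  have hβ₁ : 1 - 2 * lγ * exp (lγ ^ 2) / (γ * Ste) < 1 := sub_lt_self 1 (by positivity)
  have hF := heqγ ▸ add_mul_rpow_lt_one_add hβ hβ₁ (by positivity) (by linarith : 0 ≤ p + 1)
  have hsqrtπ : 0 < √π := sqrt_pos.mpr pi_pos
  have hcancel : Ste / √π * (√π / Ste) = 1 := by field_simp
  have hg : lγ * exp (lγ ^ 2) * erf lγ < l * exp (l ^ 2) * erf l :=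
    calc lγ * exp (lγ ^ 2) * erf lγ
        = Ste / √π * (√π / Ste * (lγ * exp (lγ ^ 2) * erf lγ)) := by
          rw [← mul_assoc, hcancel, one_mul]
      _ < Ste / √π * (1 + δ / (p + 1)) := by gcongr
      _ = l * exp (l ^ 2) * erf l := hlam.symm
  exact hg.not_ge (monotoneOn_mul_exp_sq_mul_erf hl.le hlγ.le hle)

/-- For every γ > 0 one has λ_γ < λ. -/
theorem lambda_gamma_lt_lambda (δ p Ste γ l lγ : ℝ) (hδ : 0 ≤ δ) (hp : 0 ≤ p)
    (hSte : 0 < Ste) (hγ : 0 < γ) (hl : 0 < l) (hlγ : 0 < lγ)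
    (hlam : l * Real.exp (l^2) * erf l = (Ste / Real.sqrt π) * (1 + δ / (p + 1)))
    (hβ : 0 ≤ 1 - (2 * lγ * Real.exp (lγ^2)) / (γ * Ste))
    (heqγ : (1 - (2 * lγ * Real.exp (lγ^2)) / (γ * Ste)) +
        (δ / (p + 1)) * (1 - (2 * lγ * Real.exp (lγ^2)) / (γ * Ste)) ^ (p + 1) =
      (Real.sqrt π / Ste) * (lγ * Real.exp (lγ^2) * erf lγ)) :
    lγ < l :=
  lambda_gamma_lt_lambda_general δ p Ste γ l lγ hδ hp hSte hγ hl hlam hβ heqγ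
end

section
/- Let δ ≥ 0, p ≥ 0, Ste > 0 and let g = (Ste/√π)·(1 + δ/(p+1)). If λ(p) denotes the unique positive solution of x·exp(x²)·erf(x) = (Ste/√π)·(1 + δ/(p+1)), then λ(p) is decreasing in p: for 0 ≤ p₁ < p₂, λ(p₂) ≤ λ(p₁), with strict inequality if δ > 0. -/
open Real

lemma erf_zero : erf 0 = 0 := by
  simp [erf]

lemma hasDerivAt_erf (x : ℝ) : HasDerivAt erf (2 / √π * exp (-x ^ 2)) x :=
  ((Continuous.integral_hasStrictDerivAt (by fun_prop) 0 x).hasDerivAt).const_mul _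

lemma erf_strictMono : StrictMono erf :=
  strictMono_of_deriv_pos fun x => by
    rw [(hasDerivAt_erf x).deriv]
    positivity

lemma erf_pos {x : ℝ} (hx : 0 < x) : 0 < erf x :=
  erf_zero ▸ erf_strictMono hx

lemma strictMonoOn_mul_exp_sq_mul_erf :
    StrictMonoOn (fun x => x * exp (x ^ 2) * erf x) (Set.Ioi 0) := by
  intro a (ha : 0 < a) b _ hab
  have hexp : exp (a ^ 2) < exp (b ^ 2) := exp_lt_exp.2 (by gcongr)
  exact mul_lt_mul'' (mul_lt_mul'' hab hexp ha.le (exp_pos _).le) (erf_strictMono hab)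
    (by positivity) (erf_pos ha).le

/-- λ(p) is decreasing in p: for 0 ≤ p₁ < p₂ one has λ(p₂) ≤ λ(p₁),
with strict inequality if δ > 0. -/
theorem lambda_decreasing_in_p (δ Ste p₁ p₂ l₁ l₂ : ℝ) (hδ : 0 ≤ δ)
    (hSte : 0 < Ste) (hp₁ : 0 ≤ p₁) (hp₁₂ : p₁ < p₂)
    (hl₁ : 0 < l₁) (hl₂ : 0 < l₂)
    (heq₁ : l₁ * Real.exp (l₁^2) * erf l₁ = (Ste / Real.sqrt π) * (1 + δ / (p₁ + 1)))
    (heq₂ : l₂ * Real.exp (l₂^2) * erf l₂ = (Ste / Real.sqrt π) * (1 + δ / (p₂ + 1))) :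
    l₂ ≤ l₁ ∧ (0 < δ → l₂ < l₁) := by
  have hf := strictMonoOn_mul_exp_sq_mul_erf
  have hp : 0 < p₁ + 1 := by linarith
  constructor
  · refine (hf.le_iff_le hl₂ hl₁).1 ?_
    simp only [heq₁, heq₂]
    gcongr
  · intro hδ'
    refine (hf.lt_iff_lt hl₂ hl₁).1 ?_
    simp only [heq₁, heq₂]
    gcongr
end
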